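/- Let d ≥ 1, δ > 0, ι > 0, x₀ ∈ ℝ^d, and let I_δ := x₀ + δ·[−1/2,1/2]^d be a cube with Lebesgue measure. Let A : ℝ^d → ℝ^{d×d} be bounded measurable. Let v and w be twice continuously differentiable on a neighborhood of the closed cube I_δ, let η ∈ ℝ^d, and let W_l(x) = c + η·x be affine. Assume (i) the average of ∇w over I_δ equals η, i.e. δ^{−d}∫_{I_δ}∇w dx = η, and (ii) the orthogonality relation ∫_{I_δ} ( A(x)∇v(x)·∇(w−W_l)(x) + ι² ⟨∇²v(x), ∇²(w−W_l)(x)⟩_F ) dx = 0. Then Hill's condition holds: η · ∫_{I_δ} A(x)∇v(x) dx = ∫_{I_δ} ( ∇w(x)·A(x)∇v(x) + ι² ⟨∇²w(x), ∇²v(x)⟩_F ) dx; equivalently, with ⟨f⟩_{I_δ} denoting the mean of f over I_δ, η·⟨A∇v⟩_{I_δ} = ⟨∇w·A∇v⟩_{I_δ} + ι²⟨∇²w:∇²v⟩_{I_δ}. -/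

import Mathlib

open MeasureTheory Matrix

noncomputable section

/-- The cube `x₀ + r·[-1/2,1/2]^d`. -/
def cube (d : ℕ) (x₀ : Fin d → ℝ) (r : ℝ) : Set (Fin d → ℝ) :=
  {x | ∀ i, |x i - x₀ i| ≤ r / 2}

/-- The gradient of `v : ℝ^d → ℝ`. -/
def grad (d : ℕ) (v : (Fin d → ℝ) → ℝ) (x : Fin d → ℝ) : Fin d → ℝ :=
  fun i => fderiv ℝ v x (Pi.single i 1)

/-- The Hessian matrix of `v : ℝ^d → ℝ`. -/
def hess (d : ℕ) (v : (Fin d → ℝ) → ℝ) (x : Fin d → ℝ) : Matrix (Fin d) (Fin d) ℝ :=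
  Matrix.of fun i j => fderiv ℝ (fun y => fderiv ℝ v y (Pi.single j 1)) x (Pi.single i 1)

/-- Frobenius inner product of matrices. -/
def frob (d : ℕ) (M N : Matrix (Fin d) (Fin d) ℝ) : ℝ := ∑ i, ∑ j, M i j * N i j

-- the continuous linear map y ↦ η ⬝ᵥ y
def etaCLM (d : ℕ) (η : Fin d → ℝ) : (Fin d → ℝ) →L[ℝ] ℝ :=
  ∑ i, η i • (ContinuousLinearMap.proj i : ((Fin d → ℝ)) →L[ℝ] ℝ)

lemma etaCLM_apply (d : ℕ) (η : Fin d → ℝ) (y : Fin d → ℝ) :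
    etaCLM d η y = η ⬝ᵥ y := by
  simp [etaCLM, dotProduct, ContinuousLinearMap.sum_apply]

lemma etaCLM_single (d : ℕ) (η : Fin d → ℝ) (i : Fin d) :
    etaCLM d η (Pi.single i 1) = η i := by
  rw [etaCLM_apply]; simp [dotProduct, Pi.single_apply, mul_comm]

lemma hasFDerivAt_affine (d : ℕ) (c : ℝ) (η : Fin d → ℝ) (x : Fin d → ℝ) :
    HasFDerivAt (fun y : Fin d → ℝ => c + η ⬝ᵥ y) (etaCLM d η) x := by
  have : (fun y : Fin d → ℝ => c + η ⬝ᵥ y) = fun y => c + etaCLM d η y := by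
    funext y; rw [etaCLM_apply]
  rw [this]
  exact (etaCLM d η).hasFDerivAt.const_add c

lemma grad_sub_affine (d : ℕ) (w : (Fin d → ℝ) → ℝ) (c : ℝ) (η : Fin d → ℝ)
    (x : Fin d → ℝ) (hwd : DifferentiableAt ℝ w x) (i : Fin d) :
    grad d (fun y => w y - (c + η ⬝ᵥ y)) x i = grad d w x i - η i := by
  have h : fderiv ℝ (fun y => w y - (c + η ⬝ᵥ y)) x = fderiv ℝ w x - etaCLM d η :=
    (hwd.hasFDerivAt.sub (hasFDerivAt_affine d c η x)).fderiv
  simp only [grad, h, ContinuousLinearMap.sub_apply, etaCLM_single]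

lemma hess_sub_affine (d : ℕ) (w : (Fin d → ℝ) → ℝ) (c : ℝ) (η : Fin d → ℝ)
    (U : Set (Fin d → ℝ)) (hU : IsOpen U) (hw : ContDiffOn ℝ 2 w U)
    (x : Fin d → ℝ) (hx : x ∈ U) :
    hess d (fun y => w y - (c + η ⬝ᵥ y)) x = hess d w x := by
  have hwd : ∀ y ∈ U, DifferentiableAt ℝ w y := fun y hy =>
    (hw.contDiffAt (hU.mem_nhds hy)).differentiableAt two_ne_zero
  ext i j
  have hev : (fun y => fderiv ℝ (fun z => w z - (c + η ⬝ᵥ z)) y (Pi.single j 1))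
      =ᶠ[nhds x] (fun y => fderiv ℝ w y (Pi.single j 1) - η j) := by
    filter_upwards [hU.mem_nhds hx] with y hy
    exact grad_sub_affine d w c η y (hwd y hy) j
  have := hev.fderiv_eq (𝕜 := ℝ)
  simp only [hess, Matrix.of_apply, this, fderiv_sub_const]
lemma cube_eq_pi (d : ℕ) (x₀ : Fin d → ℝ) (r : ℝ) :
    cube d x₀ r = Set.univ.pi fun i => Set.Icc (x₀ i - r/2) (x₀ i + r/2) := by
  ext x
  simp only [cube, Set.mem_setOf_eq, Set.mem_pi, Set.mem_univ, forall_true_left,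
    Set.mem_Icc, abs_le]
  constructor
  · intro h i; have := h i; constructor <;> linarith [(h i).1, (h i).2]
  · intro h i; have := h i; constructor <;> linarith [(h i).1, (h i).2]

lemma cube_isCompact (d : ℕ) (x₀ : Fin d → ℝ) (r : ℝ) : IsCompact (cube d x₀ r) := by
  rw [cube_eq_pi]; exact isCompact_univ_pi fun i => isCompact_Icc

lemma cube_measurableSet (d : ℕ) (x₀ : Fin d → ℝ) (r : ℝ) : MeasurableSet (cube d x₀ r) :=
  (cube_isCompact d x₀ r).isClosed.measurableSet

lemma grad_contOn (d : ℕ) (v : (Fin d → ℝ) → ℝ) (U : Set (Fin d → ℝ))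
    (hU : IsOpen U) (hv : ContDiffOn ℝ 2 v U) : ContinuousOn (grad d v) U := by
  have h1 : ContDiffOn ℝ 1 (fderiv ℝ v) U := hv.fderiv_of_isOpen hU (by norm_num)
  exact continuousOn_pi.2 fun i => h1.continuousOn.clm_apply continuousOn_const

lemma hess_contOn (d : ℕ) (v : (Fin d → ℝ) → ℝ) (U : Set (Fin d → ℝ))
    (hU : IsOpen U) (hv : ContDiffOn ℝ 2 v U) (i j : Fin d) :
    ContinuousOn (fun x => hess d v x i j) U := by
  have h1 : ContDiffOn ℝ 1 (fderiv ℝ v) U := hv.fderiv_of_isOpen hU (by norm_num)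
  have h2 : ContDiffOn ℝ 1 (fun y => fderiv ℝ v y (Pi.single j 1)) U :=
    h1.clm_apply contDiffOn_const
  have h3 : ContDiffOn ℝ 0 (fderiv ℝ (fun y => fderiv ℝ v y (Pi.single j 1))) U :=
    h2.fderiv_of_isOpen hU (by norm_num)
  exact h3.continuousOn.clm_apply continuousOn_const

lemma frob_comm (d : ℕ) (M N : Matrix (Fin d) (Fin d) ℝ) : frob d M N = frob d N M := by
  simp [frob, mul_comm]

/-- Hill's condition for the fourth-order HMM cell problem. -/
theorem hill_condition
    (d : ℕ) (hd : 1 ≤ d) (δ ι : ℝ) (hδ : 0 < δ) (hι : 0 < ι)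
    (x₀ : Fin d → ℝ) (A : (Fin d → ℝ) → Matrix (Fin d) (Fin d) ℝ)
    (hAmeas : ∀ i j, Measurable (fun x => A x i j))
    (hAbdd : ∃ M : ℝ, ∀ x ∈ cube d x₀ δ, ∀ i j, |A x i j| ≤ M)
    (v w : (Fin d → ℝ) → ℝ)
    (hv : ∃ U : Set (Fin d → ℝ), IsOpen U ∧ cube d x₀ δ ⊆ U ∧ ContDiffOn ℝ 2 v U)
    (hw : ∃ U : Set (Fin d → ℝ), IsOpen U ∧ cube d x₀ δ ⊆ U ∧ ContDiffOn ℝ 2 w U)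
    (c : ℝ) (η : Fin d → ℝ)
    (havg : (δ ^ d)⁻¹ • (∫ x in cube d x₀ δ, grad d w x) = η)
    (horth : (∫ x in cube d x₀ δ,
        ((A x).mulVec (grad d v x) ⬝ᵥ grad d (fun y => w y - (c + η ⬝ᵥ y)) x
          + ι ^ 2 * frob d (hess d v x) (hess d (fun y => w y - (c + η ⬝ᵥ y)) x))) = 0) :
    η ⬝ᵥ (∫ x in cube d x₀ δ, (A x).mulVec (grad d v x))
      = ∫ x in cube d x₀ δ,
          (grad d w x ⬝ᵥ (A x).mulVec (grad d v x)
            + ι ^ 2 * frob d (hess d w x) (hess d (v) x)) := by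
  obtain ⟨U, hUo, hUs, hvC⟩ := hv
  obtain ⟨V, hVo, hVs, hwC⟩ := hw
  set Q := cube d x₀ δ with hQdef
  have hQm : MeasurableSet Q := cube_measurableSet d x₀ δ
  have hQc : IsCompact Q := cube_isCompact d x₀ δ
  haveI : IsFiniteMeasure (volume.restrict Q) :=
    ⟨by rw [Measure.restrict_apply_univ]; exact hQc.measure_lt_top⟩
  haveI : Nonempty (Fin d) := ⟨⟨0, hd⟩⟩
  have hx₀Q : x₀ ∈ Q := by
    intro i; simp only [sub_self, abs_zero]; positivity
  have hwdiff : ∀ x ∈ Q, DifferentiableAt ℝ w x := fun x hx =>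
    (hwC.contDiffAt (hVo.mem_nhds (hVs hx))).differentiableAt two_ne_zero
  set F : (Fin d → ℝ) → (Fin d → ℝ) := fun x => (A x).mulVec (grad d v x) with hFdef
  -- rewrite the orthogonality integrand
  have horth' : (∫ x in Q, (grad d w x ⬝ᵥ F x
        + ι ^ 2 * frob d (hess d w x) (hess d v x) - η ⬝ᵥ F x)) = 0 := by
    rw [← horth]
    refine (setIntegral_congr_fun hQm fun x hx => ?_).symm
    have hg : grad d (fun y => w y - (c + η ⬝ᵥ y)) x = fun i => grad d w x i - η i :=
      funext fun i => grad_sub_affine d w c η x (hwdiff x hx) i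
    have hh := hess_sub_affine d w c η V hVo hwC x (hVs hx)
    rw [hg, hh, show (fun i => grad d w x i - η i) = grad d w x - η from rfl,
      dotProduct_sub, frob_comm, dotProduct_comm (F x), dotProduct_comm (F x)]
    ring
  -- continuity and bounds
  obtain ⟨M, hM⟩ := hAbdd
  have hgradvQ : ContinuousOn (grad d v) Q := (grad_contOn d v U hUo hvC).mono hUs
  have hgradwQ : ContinuousOn (grad d w) Q := (grad_contOn d w V hVo hwC).mono hVs
  obtain ⟨C, hC⟩ := hQc.exists_bound_of_continuousOn hgradvQ
  obtain ⟨C', hC'⟩ := hQc.exists_bound_of_continuousOn hgradwQ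
  have hM0 : 0 ≤ M := le_trans (abs_nonneg _) (hM x₀ hx₀Q ⟨0, hd⟩ ⟨0, hd⟩)
  have hC0 : 0 ≤ C := le_trans (norm_nonneg _) (hC x₀ hx₀Q)
  have hC'0 : 0 ≤ C' := le_trans (norm_nonneg _) (hC' x₀ hx₀Q)
  have hFbound : ∀ x ∈ Q, ∀ i, |F x i| ≤ d * (M * C) := by
    intro x hx i
    calc |F x i| = |∑ j, A x i j * grad d v x j| := rfl
      _ ≤ ∑ j, |A x i j * grad d v x j| := Finset.abs_sum_le_sum_abs _ _
      _ ≤ ∑ _j : Fin d, M * C := by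
          refine Finset.sum_le_sum fun j _ => ?_
          rw [abs_mul]
          exact mul_le_mul (hM x hx i j)
            (le_trans (norm_le_pi_norm (grad d v x) j) (hC x hx)) (abs_nonneg _) hM0
      _ = d * (M * C) := by simp [Finset.sum_const, mul_comm]
  -- measurability
  have hAmat : Measurable (fun x => (fun i j => A x i j : Fin d → Fin d → ℝ)) :=
    measurable_pi_lambda _ fun i => measurable_pi_lambda _ fun j => hAmeas i j
  have hgv : AEMeasurable (grad d v) (volume.restrict Q) := hgradvQ.aemeasurable hQm
  have hgw : AEMeasurable (grad d w) (volume.restrict Q) := hgradwQ.aemeasurable hQm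
  have hmulVec_cont : Continuous
      (fun p : (Fin d → Fin d → ℝ) × (Fin d → ℝ) => (fun i => ∑ j, p.1 i j * p.2 j : Fin d → ℝ)) := by
    refine continuous_pi fun i => ?_
    exact continuous_finset_sum _ fun j _ =>
      (((continuous_apply j).comp ((continuous_apply i).comp continuous_fst)).mul
        ((continuous_apply j).comp continuous_snd))
  have hFmeas : AEMeasurable F (volume.restrict Q) := by
    have hFeq : F = (fun p : (Fin d → Fin d → ℝ) × (Fin d → ℝ) =>
        (fun i => ∑ j, p.1 i j * p.2 j : Fin d → ℝ)) ∘
        (fun x => ((fun i j => A x i j : Fin d → Fin d → ℝ), grad d v x)) := by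
      funext x; funext i; rfl
    rw [hFeq]
    exact hmulVec_cont.measurable.comp_aemeasurable (hAmat.aemeasurable.prodMk hgv)
  have hdot_cont : Continuous (fun p : (Fin d → ℝ) × (Fin d → ℝ) => p.1 ⬝ᵥ p.2) := by
    simp only [dotProduct]
    exact continuous_finset_sum _ fun j _ =>
      ((continuous_apply j).comp continuous_fst).mul ((continuous_apply j).comp continuous_snd)
  -- integrability of the pieces
  have hFint : IntegrableOn F Q := by
    refine ⟨hFmeas.aestronglyMeasurable, HasFiniteIntegral.of_bounded
      (C := d * (M * C)) ?_⟩
    filter_upwards [ae_restrict_mem hQm] with x hx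
    exact pi_norm_le_iff_of_nonneg (by positivity) |>.2 fun i => by
      simpa [Real.norm_eq_abs] using hFbound x hx i
  have hg1meas : AEMeasurable (fun x => grad d w x ⬝ᵥ F x) (volume.restrict Q) := by
    have : (fun x => grad d w x ⬝ᵥ F x) =
        (fun p : (Fin d → ℝ) × (Fin d → ℝ) => p.1 ⬝ᵥ p.2) ∘ (fun x => (grad d w x, F x)) := rfl
    rw [this]
    exact hdot_cont.measurable.comp_aemeasurable (hgw.prodMk hFmeas)
  have hg1int : IntegrableOn (fun x => grad d w x ⬝ᵥ F x) Q := by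
    refine ⟨hg1meas.aestronglyMeasurable, HasFiniteIntegral.of_bounded
      (C := d * (C' * (d * (M * C)))) ?_⟩
    filter_upwards [ae_restrict_mem hQm] with x hx
    rw [Real.norm_eq_abs]
    calc |grad d w x ⬝ᵥ F x| ≤ ∑ j, |grad d w x j * F x j| := Finset.abs_sum_le_sum_abs _ _
      _ ≤ ∑ _j : Fin d, C' * (d * (M * C)) := by
          refine Finset.sum_le_sum fun j _ => ?_
          rw [abs_mul]
          exact mul_le_mul (le_trans (norm_le_pi_norm (grad d w x) j) (hC' x hx))
            (hFbound x hx j) (abs_nonneg _) hC'0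
      _ = d * (C' * (d * (M * C))) := by simp [Finset.sum_const, mul_comm]
  have hg2int : IntegrableOn (fun x => ι ^ 2 * frob d (hess d w x) (hess d v x)) Q := by
    refine ContinuousOn.integrableOn_compact hQc ?_
    refine ContinuousOn.mul continuousOn_const ?_
    refine continuousOn_finset_sum _ fun i _ => continuousOn_finset_sum _ fun j _ => ?_
    exact ((hess_contOn d w V hVo hwC i j).mono hVs).mul ((hess_contOn d v U hUo hvC i j).mono hUs)
  have hg3int : IntegrableOn (fun x => η ⬝ᵥ F x) Q := by
    have : (fun x => η ⬝ᵥ F x) = fun x => etaCLM d η (F x) := by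
      funext x; rw [etaCLM_apply]
    rw [this]
    exact (etaCLM d η).integrable_comp hFint
  -- assemble
  have hsub := integral_sub (hg1int.add hg2int) hg3int
  simp only [Pi.add_apply, Pi.sub_apply] at hsub
  rw [hsub] at horth'
  have hfinal : (∫ x in Q, η ⬝ᵥ F x) = η ⬝ᵥ (∫ x in Q, F x) := by
    have h1 : (∫ x in Q, η ⬝ᵥ F x) = ∫ x in Q, etaCLM d η (F x) := by
      exact integral_congr_ae (ae_of_all _ fun x => (etaCLM_apply d η (F x)).symm)
    rw [h1, ContinuousLinearMap.integral_comp_comm _ hFint, etaCLM_apply]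
  rw [← hfinal]
  linarith [horth']
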